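/- In a tadpole graph with positive edge weights, let S denote the total weight of the stem edges and C_cyc the total weight of the cycle edges. For every start vertex s: (a) there exists a closed walk from s to s visiting every vertex whose cost equals 2S + C_cyc (traversing each stem edge exactly twice and each cycle edge exactly once); and (b) for every cycle edge e there exists a closed walk from s to s visiting every vertex whose cost equals 2S + 2(C_cyc − c(e)) (traversing each stem edge and each cycle edge other than e exactly twice and never traversing e). -/

import Mathlib

/-- A tadpole graph: a finite connected simple graph with exactly one vertex of
degree 1, exactly one vertex of degree 3, and all other vertices of degree 2. -/
def IsTadpole {V : Type*} [Fintype V] (G : SimpleGraph V) [DecidableRel G.Adj] : Prop :=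
  G.Connected ∧ ∃ x y : V, x ≠ y ∧ G.degree x = 1 ∧ G.degree y = 3 ∧
    ∀ v : V, v ≠ x → v ≠ y → G.degree v = 2

/-- The cost of a walk: the sum of the weights of the edges it traverses,
counted with multiplicity. -/
def walkCost {V : Type*} {G : SimpleGraph V} (c : Sym2 V → ℝ) {u v : V}
    (p : G.Walk u v) : ℝ :=
  (p.edges.map c).sum

/-! Counting degrees gives `|E| = |V|`, so `G` contains a cycle. An edge off that cycle is a
bridge: otherwise deleting it would leave a connected graph with `|V| - 1` edges, i.e. a tree,
that still contains the cycle. Along a trail with distinct ends every other vertex meets an even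
number of trail edges and each end an odd number. Hence the path from the leaf to the first vertex
`t` of the cycle, followed by the cycle, is a trail meeting `t` in at least three edges, so `t` is
the vertex of degree 3, and it meets every vertex on it in as many edges as the vertex has; by
connectedness this stem and cycle make up the whole graph. The walks are then the stem traversed
out and back together with the cycle (or with the cycle minus `e` traversed out and back on both
sides of `e`), rotated to start at `s`. -/

open Finset

namespace SimpleGraph

variable {V : Type*} {G : SimpleGraph V}

namespace Walk

theorem exists_walk_first_mem {S : Set V} {u w : V} (p : G.Walk u w) (hw : w ∈ S) :
    ∃ t ∈ S, ∃ q : G.Walk u t, ∀ v ∈ q.support, v ∈ S → v = t := by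
  induction p with
  | nil => exact ⟨_, hw, nil, by simp⟩
  | @cons u b w h p ih =>
    by_cases hu : u ∈ S
    · exact ⟨u, hu, nil, by simp⟩
    · obtain ⟨t, ht, q, hq⟩ := ih hw
      refine ⟨t, ht, cons h q, ?_⟩
      simp only [support_cons, List.mem_cons, forall_eq_or_imp]
      exact ⟨fun hu' => absurd hu' hu, hq⟩

theorem exists_isPath_first_mem [DecidableEq V] {S : Set V} {u w : V} (p : G.Walk u w)
    (hw : w ∈ S) : ∃ t ∈ S, ∃ q : G.Walk u t, q.IsPath ∧ ∀ v ∈ q.support, v ∈ S → v = t := by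
  obtain ⟨t, ht, q, hq⟩ := p.exists_walk_first_mem hw
  exact ⟨t, ht, q.bypass, q.bypass_isPath,
    fun v hv => hq v (q.support_bypass_subset_support hv)⟩

theorem IsTrail.append_of_mem_support_imp_eq {x t z : V} {p : G.Walk x t} {q : G.Walk t z}
    (hp : p.IsTrail) (hq : q.IsTrail) (hpq : ∀ v ∈ p.support, v ∈ q.support → v = t) :
    (p.append q).IsTrail := by
  rw [isTrail_def, edges_append, List.nodup_append]
  refine ⟨hp.edges_nodup, hq.edges_nodup, ?_⟩
  rintro ⟨a, b⟩ hep _ heq rfl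
  have ha := hpq a (p.fst_mem_support_of_mem_edges hep) (q.fst_mem_support_of_mem_edges heq)
  have hb := hpq b (p.snd_mem_support_of_mem_edges hep) (q.snd_mem_support_of_mem_edges heq)
  subst ha hb
  exact G.irrefl (p.adj_of_mem_edges hep)

theorem exists_eq_append_cons_of_mem_edges {u w : V} {p : G.Walk u w} {e : Sym2 V}
    (he : e ∈ p.edges) : ∃ (a b : V) (hab : G.Adj a b) (p₁ : G.Walk u a) (p₂ : G.Walk b w),
      e = s(a, b) ∧ p = p₁.append (cons hab p₂) := by
  obtain ⟨d, hd, rfl⟩ := List.mem_map.1 he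
  obtain ⟨p₁, p₂, rfl⟩ := (isSubwalk_toWalk_adj_iff_mem_darts p).2 hd
  exact ⟨d.fst, d.snd, d.adj, p₁, p₂, rfl, by rw [← append_assoc]; rfl⟩

section Count

variable [DecidableEq V]

theorem countP_mem_edges_pos {u w v : V} {p : G.Walk u w} (hp : ¬p.Nil) (hv : v ∈ p.support) :
    0 < p.edges.countP (fun e => v ∈ e) := by
  obtain ⟨e, he, hve⟩ := (mem_support_iff_exists_mem_edges_of_not_nil hp).1 hv
  exact List.countP_pos_iff.2 ⟨e, he, by simpa using hve⟩

theorem IsTrail.card_toFinset_filter_mem_edges {u w : V} {p : G.Walk u w} (hp : p.IsTrail)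
    (v : V) :
    #(p.edges.filter (fun e => v ∈ e)).toFinset = p.edges.countP (fun e => v ∈ e) := by
  rw [List.toFinset_card_of_nodup (hp.edges_nodup.filter _), List.countP_eq_length_filter]

theorem IsTrail.countP_mem_edges_pos_of_eq_or_eq {u w v : V} {p : G.Walk u w} (hp : p.IsTrail)
    (huw : u ≠ w) (hv : v = u ∨ v = w) : 0 < p.edges.countP (fun e => v ∈ e) := by
  have hodd : ¬Even (p.edges.countP (fun e => v ∈ e)) := by
    rw [hp.even_countP_edges_iff]
    rcases hv with rfl | rfl <;> simp [huw]
  exact Nat.pos_of_ne_zero fun h => hodd (by simp [h])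

theorem IsTrail.two_le_countP_mem_edges {u w v : V} {p : G.Walk u w} (hp : p.IsTrail)
    (hnil : ¬p.Nil) (hv : v ∈ p.support) (hvuw : u ≠ w → v ≠ u ∧ v ≠ w) :
    2 ≤ p.edges.countP (fun e => v ∈ e) := by
  obtain ⟨k, hk⟩ := (hp.even_countP_edges_iff v).2 hvuw
  have := countP_mem_edges_pos hnil hv
  omega

theorem IsTrail.three_le_countP_mem_edges_append {x t : V} {q : G.Walk x t} {c : G.Walk t t}
    (hxt : x ≠ t) (hq : q.IsTrail) (hc : c.IsCycle) :
    3 ≤ (q.append c).edges.countP (fun e => t ∈ e) := by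
  have := hq.countP_mem_edges_pos_of_eq_or_eq hxt (Or.inr rfl)
  have := hc.isTrail.two_le_countP_mem_edges hc.not_nil c.start_mem_support (absurd rfl)
  rw [edges_append, List.countP_append]
  omega

end Count

section Degree

variable [Fintype V] [DecidableEq V] [DecidableRel G.Adj] {u w v : V} {p : G.Walk u w}

theorem toFinset_filter_mem_edges_subset_incidenceFinset (p : G.Walk u w) (v : V) :
    (p.edges.filter (fun e => v ∈ e)).toFinset ⊆ G.incidenceFinset v := by
  intro e he
  simp only [List.mem_toFinset, List.mem_filter, decide_eq_true_eq] at he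
  exact (G.mem_incidenceFinset v e).2 ⟨p.edges_subset_edgeSet he.1, he.2⟩

theorem IsTrail.countP_mem_edges_le_degree (hp : p.IsTrail) (v : V) :
    p.edges.countP (fun e => v ∈ e) ≤ G.degree v := by
  rw [← hp.card_toFinset_filter_mem_edges, ← card_incidenceFinset_eq_degree]
  exact card_le_card (p.toFinset_filter_mem_edges_subset_incidenceFinset v)

theorem IsTrail.mem_edges_of_degree_le (hp : p.IsTrail)
    (hv : G.degree v ≤ p.edges.countP (fun e => v ∈ e)) {e : Sym2 V} (he : e ∈ G.edgeSet)
    (hve : v ∈ e) : e ∈ p.edges := by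
  rw [← hp.card_toFinset_filter_mem_edges, ← card_incidenceFinset_eq_degree] at hv
  have := eq_of_subset_of_card_le (p.toFinset_filter_mem_edges_subset_incidenceFinset v) hv ▸
    (G.mem_incidenceFinset v e).2 ⟨he, hve⟩
  simp only [List.mem_toFinset, List.mem_filter] at this
  exact this.1

theorem IsCycle.two_le_degree {c : G.Walk u u} (hc : c.IsCycle) (hv : v ∈ c.support) :
    2 ≤ G.degree v :=
  (hc.isTrail.two_le_countP_mem_edges hc.not_nil hv (absurd rfl)).trans
    (hc.isTrail.countP_mem_edges_le_degree v)

theorem IsTrail.mem_support_of_forall_degree_le (hG : G.Connected) (hp : p.IsTrail)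
    (hdeg : ∀ v ∈ p.support, G.degree v ≤ p.edges.countP (fun e => v ∈ e)) (v : V) :
    v ∈ p.support := by
  by_contra hv
  obtain ⟨q⟩ := hG.preconnected u v
  obtain ⟨d, -, hd₁, hd₂⟩ := q.exists_boundary_dart {v | v ∈ p.support} p.start_mem_support hv
  have hd : d.edge ∈ p.edges :=
    hp.mem_edges_of_degree_le (hdeg _ hd₁) d.edge_mem (Sym2.mem_mk_left _ _)
  exact hd₂ (p.snd_mem_support_of_mem_edges hd)

theorem IsTrail.mem_edges_of_forall_degree_le (hG : G.Connected) (hp : p.IsTrail)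
    (hdeg : ∀ v ∈ p.support, G.degree v ≤ p.edges.countP (fun e => v ∈ e)) {e : Sym2 V}
    (he : e ∈ G.edgeSet) : e ∈ p.edges := by
  induction e using Sym2.ind with
  | _ a b =>
    exact hp.mem_edges_of_degree_le (hdeg a (hp.mem_support_of_forall_degree_le hG hdeg a)) he
      (Sym2.mem_mk_left a b)

end Degree

end Walk

theorem Preconnected.exists_isPath_isCycle [DecidableEq V] (hG : G.Preconnected) (x : V) {u : V}
    {c : G.Walk u u} (hc : c.IsCycle) :
    ∃ (t : V) (q : G.Walk x t) (k : G.Walk t t), q.IsPath ∧ k.IsCycle ∧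
      ∀ v ∈ q.support, v ∈ k.support → v = t := by
  obtain ⟨p⟩ := hG x u
  obtain ⟨t, ht, q, hq, hfirst⟩ :=
    p.exists_isPath_first_mem (S := {v | v ∈ c.support}) c.start_mem_support
  exact ⟨t, q, c.rotate t ht, hq, hc.rotate ht,
    fun v hv hvk => hfirst v hv (by simpa using hvk)⟩

theorem isBridge_of_notMem_edges_of_isCycle [Fintype V] [DecidableRel G.Adj]
    (hG : G.Connected) (hcard : #G.edgeFinset = Fintype.card V) {u : V} {c : G.Walk u u}
    (hc : c.IsCycle) {e : Sym2 V} (he : e ∈ G.edgeSet) (hec : e ∉ c.edges) : G.IsBridge e := by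
  induction e using Sym2.ind with
  | _ a b =>
  by_contra hbr
  have htree : (G.deleteEdges {s(a, b)}).IsTree := by
    refine isTree_iff_connected_and_card.2 ⟨hG.connected_delete_edge_of_not_isBridge hbr, ?_⟩
    rw [Nat.card_coe_set_eq, edgeSet_deleteEdges, Set.ncard_sdiff_singleton_add_one he,
      Nat.card_eq_fintype_card, ← hcard, ← Set.ncard_coe_finset, coe_edgeFinset]
  exact htree.isAcyclic _ (Walk.IsCycle.toDeleteEdges G {s(a, b)} hc
    fun f hf hfe => hec (by rwa [← Set.mem_singleton_iff.1 hfe]))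

end SimpleGraph

open SimpleGraph

section WalkCost

variable {V : Type*} {G : SimpleGraph V} (c : Sym2 V → ℝ)

@[simp]
theorem walkCost_cons {u v w : V} (h : G.Adj u v) (p : G.Walk v w) :
    walkCost c (Walk.cons h p) = c s(u, v) + walkCost c p := by
  simp [walkCost]

@[simp]
theorem walkCost_append {u v w : V} (p : G.Walk u v) (q : G.Walk v w) :
    walkCost c (p.append q) = walkCost c p + walkCost c q := by
  simp [walkCost]

@[simp]
theorem walkCost_reverse {u v : V} (p : G.Walk u v) : walkCost c p.reverse = walkCost c p := by
  simp [walkCost]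

@[simp]
theorem walkCost_rotate [DecidableEq V] {u v : V} (p : G.Walk v v) (hu : u ∈ p.support) :
    walkCost c (p.rotate u hu) = walkCost c p :=
  ((p.rotate_edges u hu).perm.map c).sum_eq

end WalkCost

structure IsStemCycle {V : Type*} {G : SimpleGraph V} {x y : V} (q : G.Walk x y)
    (k : G.Walk y y) : Prop where
  isPath : q.IsPath
  isCycle : k.IsCycle
  mem_support (v : V) : v ∈ q.support ∨ v ∈ k.support
  mem_edges {e : Sym2 V} : e ∈ G.edgeSet → e ∈ q.edges ∨ e ∈ k.edges
  isBridge {e : Sym2 V} : e ∈ q.edges → G.IsBridge e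

namespace IsStemCycle

variable {V : Type*} {G : SimpleGraph V} {x y : V} {q : G.Walk x y} {k : G.Walk y y}
  {e : Sym2 V}

theorem not_isBridge (h : IsStemCycle q k) (he : e ∈ k.edges) : ¬G.IsBridge e :=
  fun hb => hb.notMem_edges_of_isCycle h.isCycle he

theorem isBridge_iff (h : IsStemCycle q k) (he : e ∈ G.edgeSet) : G.IsBridge e ↔ e ∈ q.edges :=
  ⟨fun hb => (h.mem_edges he).resolve_right fun hk => h.not_isBridge hk hb, h.isBridge⟩

theorem mem_cycle_edges (h : IsStemCycle q k) (he : e ∈ G.edgeSet) (hb : ¬G.IsBridge e) :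
    e ∈ k.edges :=
  (h.mem_edges he).resolve_left fun hq => hb (h.isBridge hq)

variable [DecidableEq V]

theorem count_edges_of_isBridge (h : IsStemCycle q k) (he : e ∈ G.edgeSet) (hb : G.IsBridge e) :
    q.edges.count e = 1 ∧ k.edges.count e = 0 :=
  ⟨List.count_eq_one_of_mem h.isPath.isTrail.edges_nodup ((h.isBridge_iff he).1 hb),
    List.count_eq_zero.2 fun hk => h.not_isBridge hk hb⟩

theorem count_edges_of_not_isBridge (h : IsStemCycle q k) (he : e ∈ G.edgeSet)
    (hb : ¬G.IsBridge e) : q.edges.count e = 0 ∧ k.edges.count e = 1 :=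
  ⟨List.count_eq_zero.2 fun hq => hb (h.isBridge hq),
    List.count_eq_one_of_mem h.isCycle.isTrail.edges_nodup (h.mem_cycle_edges he hb)⟩

theorem count_add_count (h : IsStemCycle q k) (he : e ∈ G.edgeSet) :
    q.edges.count e + k.edges.count e = 1 := by
  by_cases hb : G.IsBridge e
  · simp [h.count_edges_of_isBridge he hb]
  · simp [h.count_edges_of_not_isBridge he hb]

theorem sum_isBridge [Fintype V] [DecidableRel G.Adj] [DecidablePred G.IsBridge]
    (h : IsStemCycle q k) (c : Sym2 V → ℝ) :
    ∑ e ∈ G.edgeFinset.filter (fun e => G.IsBridge e), c e = walkCost c q := by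
  rw [walkCost, ← List.sum_toFinset _ h.isPath.isTrail.edges_nodup]
  congr 1
  ext e
  simp only [Finset.mem_filter, mem_edgeFinset, List.mem_toFinset]
  exact ⟨fun ⟨he, hb⟩ => (h.isBridge_iff he).1 hb,
    fun hq => ⟨q.edges_subset_edgeSet hq, h.isBridge hq⟩⟩

theorem sum_not_isBridge [Fintype V] [DecidableRel G.Adj] [DecidablePred G.IsBridge]
    (h : IsStemCycle q k) (c : Sym2 V → ℝ) :
    ∑ e ∈ G.edgeFinset.filter (fun e => ¬G.IsBridge e), c e = walkCost c k := by
  rw [walkCost, ← List.sum_toFinset _ h.isCycle.isTrail.edges_nodup]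
  congr 1
  ext e
  simp only [Finset.mem_filter, mem_edgeFinset, List.mem_toFinset]
  exact ⟨fun ⟨he, hb⟩ => h.mem_cycle_edges he hb,
    fun hk => ⟨k.edges_subset_edgeSet hk, h.not_isBridge hk⟩⟩

theorem exists_walk_stem_twice_cycle_once (h : IsStemCycle q k) (c : Sym2 V → ℝ) (s : V) :
    ∃ w : G.Walk s s, (∀ v : V, v ∈ w.support) ∧
      (∀ e ∈ G.edgeSet, G.IsBridge e → w.edges.count e = 2) ∧
      (∀ e ∈ G.edgeSet, ¬G.IsBridge e → w.edges.count e = 1) ∧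
      walkCost c w = 2 * walkCost c q + walkCost c k := by
  let W : G.Walk y y := (q.reverse.append q).append k
  have hW (v : V) : v ∈ W.support := by
    rcases h.mem_support v with hv | hv <;> simp [W, Walk.mem_support_append_iff, hv]
  have hcount (e : Sym2 V) :
      (W.rotate s (hW s)).edges.count e = 2 * q.edges.count e + k.edges.count e := by
    rw [(W.rotate_edges s (hW s)).perm.count_eq]
    simp only [W, Walk.edges_append, Walk.edges_reverse, List.count_append, List.count_reverse]
    ring
  refine ⟨W.rotate s (hW s), fun v => by simpa using hW v, fun e he hb => ?_, fun e he hb => ?_, ?_⟩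
  · obtain ⟨hq, hk⟩ := h.count_edges_of_isBridge he hb
    rw [hcount, hq, hk]
  · obtain ⟨hq, hk⟩ := h.count_edges_of_not_isBridge he hb
    rw [hcount, hq, hk]
  · simp only [walkCost_rotate, walkCost_append, walkCost_reverse, W]
    ring

theorem exists_walk_stem_cycle_twice_avoiding (h : IsStemCycle q k) (c : Sym2 V → ℝ) (s : V)
    (he : e ∈ G.edgeSet) (hb : ¬G.IsBridge e) :
    ∃ w : G.Walk s s, (∀ v : V, v ∈ w.support) ∧ e ∉ w.edges ∧
      (∀ f ∈ G.edgeSet, f ≠ e → w.edges.count f = 2) ∧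
      walkCost c w = 2 * walkCost c q + 2 * (walkCost c k - c e) := by
  obtain ⟨a, b, hab, k₁, k₂, rfl, rfl⟩ :=
    Walk.exists_eq_append_cons_of_mem_edges (h.mem_cycle_edges he hb)
  let W : G.Walk y y :=
    ((q.reverse.append q).append (k₁.append k₁.reverse)).append (k₂.reverse.append k₂)
  have hW (v : V) : v ∈ W.support := by
    rcases h.mem_support v with hv | hv
    · simp [W, Walk.mem_support_append_iff, hv]
    · simp only [Walk.mem_support_append_iff, Walk.support_cons, List.mem_cons] at hv
      rcases hv with hv | rfl | hv
      · simp [W, Walk.mem_support_append_iff, hv]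
      · simp [W, Walk.mem_support_append_iff]
      · simp [W, Walk.mem_support_append_iff, hv]
  have hcount (f : Sym2 V) : (W.rotate s (hW s)).edges.count f =
      2 * (q.edges.count f + k₁.edges.count f + k₂.edges.count f) := by
    rw [(W.rotate_edges s (hW s)).perm.count_eq]
    simp only [W, Walk.edges_append, Walk.edges_reverse, List.count_append, List.count_reverse]
    ring
  have hqk (f : Sym2 V) (hf : f ∈ G.edgeSet) : q.edges.count f + k₁.edges.count f +
      k₂.edges.count f + (if s(a, b) = f then 1 else 0) = 1 := by
    have := h.count_add_count hf
    simp only [Walk.edges_append, Walk.edges_cons, List.count_append, List.count_cons,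
      beq_iff_eq] at this
    omega
  refine ⟨W.rotate s (hW s), fun v => by simpa using hW v, ?_, fun f hf hfe => ?_, ?_⟩
  · rw [← List.count_eq_zero, hcount]
    have := hqk _ he
    rw [if_pos rfl] at this
    omega
  · have := hqk f hf
    rw [if_neg (Ne.symm hfe)] at this
    rw [hcount]
    omega
  · simp only [walkCost_rotate, walkCost_append, walkCost_reverse, walkCost_cons, W]
    ring

end IsStemCycle

section Tadpole

variable {V : Type*} [Fintype V] [DecidableEq V] {G : SimpleGraph V} [DecidableRel G.Adj]

theorem IsTadpole.card_edgeFinset (htad : IsTadpole G) : #G.edgeFinset = Fintype.card V := by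
  obtain ⟨-, x, y, hxy, hdx, hdy, hdeg⟩ := htad
  have hexcess : ∑ v, ((G.degree v : ℤ) - 2) = 0 := by
    rw [← sum_subset (subset_univ {x, y}) fun v _ hv => ?_]
    · simp [sum_pair hxy, hdx, hdy]
    · simp only [mem_insert, mem_singleton, not_or] at hv
      simp [hdeg v hv.1 hv.2]
  have hsum := G.sum_degrees_eq_twice_card_edges
  zify at hsum
  rw [sum_sub_distrib, hsum] at hexcess
  simp at hexcess
  omega

theorem IsTadpole.exists_isCycle (htad : IsTadpole G) : ∃ (u : V) (c : G.Walk u u), c.IsCycle := by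
  by_contra h
  simp only [not_exists] at h
  have htree : G.IsTree := ⟨htad.1, fun u c => h u c⟩
  have := htree.card_edgeFinset
  have := htad.card_edgeFinset
  omega

theorem IsTadpole.exists_isStemCycle (htad : IsTadpole G) :
    ∃ (x y : V) (q : G.Walk x y) (k : G.Walk y y), IsStemCycle q k := by
  have hcard := htad.card_edgeFinset
  obtain ⟨u, c, hc⟩ := htad.exists_isCycle
  obtain ⟨hG, x, y, hxy, hdx, hdy, hdeg⟩ := htad
  obtain ⟨t, q, k, hq, hk, hqk⟩ := hG.preconnected.exists_isPath_isCycle x hc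
  have hxt : x ≠ t := by
    rintro rfl
    have := hk.two_le_degree k.start_mem_support
    omega
  have hT := hq.isTrail.append_of_mem_support_imp_eq hk.isTrail hqk
  have h3 := hq.isTrail.three_le_countP_mem_edges_append hxt hk
  obtain rfl : y = t := by
    by_contra hty
    have := h3.trans (hT.countP_mem_edges_le_degree t)
    rw [hdeg t hxt.symm (Ne.symm hty)] at this
    omega
  have hdeg_le (v : V) (hv : v ∈ (q.append k).support) :
      G.degree v ≤ (q.append k).edges.countP (fun e => v ∈ e) := by
    by_cases hvx : v = x
    · rw [hvx, hdx]
      exact hT.countP_mem_edges_pos_of_eq_or_eq hxy (Or.inl rfl)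
    by_cases hvy : v = y
    · rwa [hvy, hdy]
    rw [hdeg v hvx hvy]
    exact hT.two_le_countP_mem_edges (Walk.not_nil_of_ne hxy) hv fun _ => ⟨hvx, hvy⟩
  have hdisj := List.disjoint_of_nodup_append (Walk.edges_append q k ▸ hT.edges_nodup)
  refine ⟨x, y, q, k, hq, hk, fun v => ?_, fun he => ?_, fun he => ?_⟩
  · simpa [Walk.mem_support_append_iff] using hT.mem_support_of_forall_degree_le hG hdeg_le v
  · simpa using hT.mem_edges_of_forall_degree_le hG hdeg_le he
  · exact isBridge_of_notMem_edges_of_isCycle hG hcard hk (q.edges_subset_edgeSet he) (hdisj he)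

end Tadpole

theorem stmt_12_general {V : Type*} [Fintype V] [DecidableEq V] (G : SimpleGraph V)
    [DecidableRel G.Adj] [DecidablePred G.IsBridge] (htad : IsTadpole G)
    (c : Sym2 V → ℝ)
    (S : ℝ) (hS : S = ∑ e ∈ G.edgeFinset.filter (fun e => G.IsBridge e), c e)
    (Ccyc : ℝ) (hCcyc : Ccyc = ∑ e ∈ G.edgeFinset.filter (fun e => ¬ G.IsBridge e), c e)
    (s : V) :
    (∃ w : G.Walk s s, (∀ v : V, v ∈ w.support) ∧
      (∀ e ∈ G.edgeSet, G.IsBridge e → w.edges.count e = 2) ∧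
      (∀ e ∈ G.edgeSet, ¬ G.IsBridge e → w.edges.count e = 1) ∧
      walkCost c w = 2 * S + Ccyc) ∧
    (∀ e ∈ G.edgeSet, ¬ G.IsBridge e →
      ∃ w : G.Walk s s, (∀ v : V, v ∈ w.support) ∧ e ∉ w.edges ∧
        (∀ f ∈ G.edgeSet, f ≠ e → w.edges.count f = 2) ∧
        walkCost c w = 2 * S + 2 * (Ccyc - c e)) := by
  obtain ⟨x, y, q, k, h⟩ := htad.exists_isStemCycle
  rw [hS, hCcyc, h.sum_isBridge, h.sum_not_isBridge]
  exact ⟨h.exists_walk_stem_twice_cycle_once c s,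
    fun e he hb => h.exists_walk_stem_cycle_twice_avoiding c s he hb⟩

/-- In a tadpole graph with positive edge weights, with `S` the total stem
(bridge) weight and `Ccyc` the total cycle (non-bridge) weight, for every start
vertex `s`: (a) there is a closed spanning walk of cost `2 * S + Ccyc`
traversing each stem edge exactly twice and each cycle edge exactly once; and
(b) for every cycle edge `e` there is a closed spanning walk of cost
`2 * S + 2 * (Ccyc - c e)` traversing each edge other than `e` exactly twice
and never traversing `e`. -/
theorem stmt_12 {V : Type*} [Fintype V] [DecidableEq V] (G : SimpleGraph V)
    [DecidableRel G.Adj] [DecidablePred G.IsBridge] (htad : IsTadpole G)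
    (c : Sym2 V → ℝ) (hc : ∀ e ∈ G.edgeSet, 0 < c e)
    (S : ℝ) (hS : S = ∑ e ∈ G.edgeFinset.filter (fun e => G.IsBridge e), c e)
    (Ccyc : ℝ) (hCcyc : Ccyc = ∑ e ∈ G.edgeFinset.filter (fun e => ¬ G.IsBridge e), c e)
    (s : V) :
    (∃ w : G.Walk s s, (∀ v : V, v ∈ w.support) ∧
      (∀ e ∈ G.edgeSet, G.IsBridge e → w.edges.count e = 2) ∧
      (∀ e ∈ G.edgeSet, ¬ G.IsBridge e → w.edges.count e = 1) ∧
      walkCost c w = 2 * S + Ccyc) ∧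
    (∀ e ∈ G.edgeSet, ¬ G.IsBridge e →
      ∃ w : G.Walk s s, (∀ v : V, v ∈ w.support) ∧ e ∉ w.edges ∧
        (∀ f ∈ G.edgeSet, f ≠ e → w.edges.count f = 2) ∧
        walkCost c w = 2 * S + 2 * (Ccyc - c e)) :=
  stmt_12_general G htad c S hS Ccyc hCcyc s
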